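/- Let G be a finite simple graph whose independence number is α. Let W(G) be the graph obtained by attaching a whisker to every vertex of G. Then the induced matching number of W(G) is at most α: ind-match(W(G)) ≤ α(G). -/

import Mathlib

open SimpleGraph

namespace Paper

/-- The complete graph on two vertices, `K₂`. -/
def k2 : SimpleGraph (Fin 2) := ⊤

/-- The 5-cycle `C₅`. -/
def cycle5 : SimpleGraph (ZMod 5) := SimpleGraph.fromRel (fun a b => b = a + 1)

/-- A graph is chordal if it has no induced cycle of length at least four. -/
def IsChordal {V : Type*} (G : SimpleGraph V) : Prop :=
  ∀ n : ℕ, 4 ≤ n → IsEmpty (SimpleGraph.cycleGraph n ↪g G)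

/-- A graph is co-chordal if its complement is chordal. -/
def IsCochordal {V : Type*} (G : SimpleGraph V) : Prop := IsChordal Gᶜ

/-- The co-chordal cover number: the minimum number of co-chordal subgraphs of `G`
needed to cover all edges of `G`. -/
noncomputable def cochord {V : Type*} (G : SimpleGraph V) : ℕ :=
  sInf { t | ∃ f : Fin t → SimpleGraph V,
    (∀ i, f i ≤ G ∧ IsCochordal (f i)) ∧ ∀ ⦃u v : V⦄, G.Adj u v → ∃ i, (f i).Adj u v }

/-- The closed neighborhood `N_G[w]`. -/
def closedNbhd {V : Type*} (G : SimpleGraph V) (w : V) : Set V :=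
  insert w (G.neighborSet w)

/-- The graph `G - N_G[w]`: the induced subgraph on the complement of the closed
neighborhood of `w`. -/
def delClosedNbhd {V : Type*} (G : SimpleGraph V) (w : V) :
    SimpleGraph ((closedNbhd G w)ᶜ : Set V) := G.induce _

/-- A maximal matching: a matching such that no edge of `G` is disjoint from all of
its edges. -/
def IsMaximalMatching {V : Type*} (G : SimpleGraph V) (M : G.Subgraph) : Prop :=
  M.IsMatching ∧ ∀ ⦃u v : V⦄, G.Adj u v → u ∈ M.support ∨ v ∈ M.support

/-- The minimum matching number: the minimum cardinality of a maximal matching. -/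
noncomputable def minMatch {V : Type*} (G : SimpleGraph V) : ℕ :=
  sInf { k | ∃ M : G.Subgraph, IsMaximalMatching G M ∧ M.edgeSet.ncard = k }

/-- The matching number of a graph: maximum cardinality of a matching. -/
noncomputable def matchNum {V : Type*} (G : SimpleGraph V) : ℕ :=
  sSup { k | ∃ M : G.Subgraph, M.IsMatching ∧ M.edgeSet.ncard = k }

/-- A graph all of whose connected components are isomorphic to `K₂` or `C₅`. -/
def IsK2C5Graph {V : Type*} (G : SimpleGraph V) : Prop :=
  ∀ c : G.ConnectedComponent,
    Nonempty (G.induce c.supp ≃g k2) ∨ Nonempty (G.induce c.supp ≃g cycle5)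

/-- A maximal `{K₂, C₅}`-subgraph of `G`: a subgraph whose components are all `K₂` or
`C₅` such that the induced subgraph of `G` on the vertices outside it has no edge. -/
def IsMaximalK2C5Subgraph {V : Type*} (G : SimpleGraph V) (H : G.Subgraph) : Prop :=
  IsK2C5Graph H.coe ∧ ∀ ⦃u v : V⦄, G.Adj u v → u ∈ H.verts ∨ v ∈ H.verts

/-- `min-match_{K₂,C₅}(G)`: the minimum matching number of a maximal
`{K₂, C₅}`-subgraph of `G` (with value `0` if `G` has no edge, via `sInf ∅ = 0`:
if `G` is edgeless the empty subgraph is a maximal `{K₂,C₅}`-subgraph). -/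
noncomputable def minMatchK2C5 {V : Type*} (G : SimpleGraph V) : ℕ :=
  sInf { k | ∃ H : G.Subgraph, IsMaximalK2C5Subgraph G H ∧ matchNum H.coe = k }

/-- An induced matching of `G`. -/
def IsInducedMatching {V : Type*} (G : SimpleGraph V) (M : G.Subgraph) : Prop :=
  M.IsMatching ∧ ∀ ⦃u v : V⦄, G.Adj u v → u ∈ M.support → v ∈ M.support → M.Adj u v

/-- The induced matching number of `G`. -/
noncomputable def indMatch {V : Type*} (G : SimpleGraph V) : ℕ :=
  sSup { k | ∃ M : G.Subgraph, IsInducedMatching G M ∧ M.edgeSet.ncard = k }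

/-- `ind-match_{K₂,C₅}(G)`: the maximum matching number of an induced subgraph of `G`
all of whose connected components are `K₂` or `C₅`. -/
noncomputable def indMatchK2C5 {V : Type*} (G : SimpleGraph V) : ℕ :=
  sSup { k | ∃ s : Set V, IsK2C5Graph (G.induce s) ∧ matchNum (G.induce s) = k }

/-- The whisker graph `W(G)`: to each vertex `v : V` (as `Sum.inl v`) we attach a new
pendant vertex `Sum.inr v` joined to it by an edge. -/
def whisker {V : Type*} (G : SimpleGraph V) : SimpleGraph (V ⊕ V) :=
  SimpleGraph.fromRel (fun a b =>
    (∃ u v : V, a = Sum.inl u ∧ b = Sum.inl v ∧ G.Adj u v) ∨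
    (∃ v : V, a = Sum.inl v ∧ b = Sum.inr v))

/-- An independent set of vertices. -/
def IsIndepSet {V : Type*} (G : SimpleGraph V) (s : Set V) : Prop :=
  s.Pairwise fun u v => ¬ G.Adj u v

/-- The independence number of `G`. -/
noncomputable def indepNum {V : Type*} (G : SimpleGraph V) : ℕ :=
  sSup { k | ∃ s : Set V, IsIndepSet G s ∧ s.ncard = k }

end Paper

/-! Every edge of `W(G)` has an endpoint in `V`. Choosing such an endpoint in each edge of an
induced matching gives distinct vertices, since the edges of a matching are disjoint, and
pairwise non-adjacent ones, since an edge of `G` between two of them would join two edges of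
the induced matching. -/

namespace SimpleGraph.Subgraph

variable {W : Type*} {H : SimpleGraph W} {M : H.Subgraph}

lemma mem_support_of_mem_edgeSet {e : Sym2 W} (he : e ∈ M.edgeSet) {x : W} (hx : x ∈ e) :
    x ∈ M.support := by
  obtain ⟨y, rfl⟩ := Sym2.mem_iff_exists.mp hx
  exact ⟨y, he⟩

lemma IsMatching.eq_of_mem_edgeSet (hM : M.IsMatching) {e₁ e₂ : Sym2 W}
    (he₁ : e₁ ∈ M.edgeSet) (he₂ : e₂ ∈ M.edgeSet) {x : W} (hx₁ : x ∈ e₁) (hx₂ : x ∈ e₂) :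
    e₁ = e₂ := by
  obtain ⟨y₁, rfl⟩ := Sym2.mem_iff_exists.mp hx₁
  obtain ⟨y₂, rfl⟩ := Sym2.mem_iff_exists.mp hx₂
  obtain rfl := hM.eq_of_adj_left he₁ he₂
  rfl

end SimpleGraph.Subgraph

namespace Paper

lemma IsInducedMatching.not_adj_of_mem {W : Type*} {H : SimpleGraph W} {M : H.Subgraph}
    (hM : IsInducedMatching H M) {e₁ e₂ : Sym2 W} (he₁ : e₁ ∈ M.edgeSet)
    (he₂ : e₂ ∈ M.edgeSet) (hne : e₁ ≠ e₂) {x y : W} (hx : x ∈ e₁) (hy : y ∈ e₂) :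
    ¬ H.Adj x y := by
  intro hxy
  have hM_xy : s(x, y) ∈ M.edgeSet :=
    hM.2 hxy (M.mem_support_of_mem_edgeSet he₁ hx) (M.mem_support_of_mem_edgeSet he₂ hy)
  exact hne ((hM.1.eq_of_mem_edgeSet he₁ hM_xy hx (Sym2.mem_mk_left x y)).trans
    (hM.1.eq_of_mem_edgeSet hM_xy he₂ (Sym2.mem_mk_right x y) hy))

lemma ncard_le_indepNum {V : Type*} [Finite V] {G : SimpleGraph V} {s : Set V}
    (hs : IsIndepSet G s) : s.ncard ≤ indepNum G :=
  le_csSup ⟨Nat.card V, by rintro _ ⟨t, -, rfl⟩; exact Set.ncard_le_card t⟩ ⟨s, hs, rfl⟩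

section whisker

variable {V : Type*} {G : SimpleGraph V}

lemma whisker_adj_inl_inl {u v : V} : (whisker G).Adj (.inl u) (.inl v) ↔ G.Adj u v := by
  simp only [whisker, fromRel_adj]
  constructor
  · rintro ⟨-, (⟨u', v', hu, hv, h⟩ | ⟨_, -, h⟩) | (⟨u', v', hv, hu, h⟩ | ⟨_, -, h⟩)⟩
    · cases hu; cases hv; exact h
    · cases h
    · cases hu; cases hv; exact h.symm
    · cases h
  · intro h
    exact ⟨Sum.inl_injective.ne h.ne, .inl (.inl ⟨u, v, rfl, rfl, h⟩)⟩

lemma exists_inl_mem_of_mem_edgeSet_whisker {e : Sym2 (V ⊕ V)}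
    (he : e ∈ (whisker G).edgeSet) : ∃ v, Sum.inl v ∈ e := by
  induction e using Sym2.ind with
  | _ x y =>
    rw [mem_edgeSet, whisker, fromRel_adj] at he
    obtain ⟨-, (⟨u, -, rfl, -⟩ | ⟨v, rfl, -⟩) | (⟨u, -, rfl, -⟩ | ⟨v, rfl, -⟩)⟩ := he
    exacts [⟨u, Sym2.mem_mk_left _ _⟩, ⟨v, Sym2.mem_mk_left _ _⟩,
      ⟨u, Sym2.mem_mk_right _ _⟩, ⟨v, Sym2.mem_mk_right _ _⟩]

end whisker

/-- The induced matching number of the whisker graph `W(G)` is at most the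
independence number of `G`. -/
theorem stmt14 {V : Type*} [Fintype V] (G : SimpleGraph V) :
    indMatch (whisker G) ≤ indepNum G := by
  refine csSup_le' ?_
  rintro _ ⟨M, hM, rfl⟩
  choose f hf using fun e : M.edgeSet =>
    exists_inl_mem_of_mem_edgeSet_whisker (M.edgeSet_subset e.2)
  have hinj : Function.Injective f := fun e₁ e₂ h =>
    Subtype.ext (hM.1.eq_of_mem_edgeSet e₁.2 e₂.2 (hf e₁) (h ▸ hf e₂))
  have hindep : IsIndepSet G (Set.range f) := by
    rintro _ ⟨e₁, rfl⟩ _ ⟨e₂, rfl⟩ hne hadj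
    exact hM.not_adj_of_mem e₁.2 e₂.2 (fun h => hne (congrArg f (Subtype.ext h)))
      (hf e₁) (hf e₂) (whisker_adj_inl_inl.mpr hadj)
  calc M.edgeSet.ncard = (Set.range f).ncard := (Set.ncard_range_of_injective hinj).symm
    _ ≤ indepNum G := ncard_le_indepNum hindep

end Paper
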